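/- arXiv:gr-qc/0303025 — 12 statements merged into one kernel-verified Lean document; each statement's English description precedes it below -/
import Mathlib

section
/- The relation ≪_C on the causal completion M̄, defined by (P,P*) ≪_C (Q,Q*) iff P* ∩ Q ≠ ∅, is a chronology on M̄: it is transitive, and it is irreflexive (no P̄ ∈ M̄ satisfies P̄ ≪_C P̄). -/
open Set Topology

variable {M : Type*}

/-- Chronological past of a point: `I⁻(p) = {q | q ≪ p}`. -/
def Iminus (ll : M → M → Prop) (p : M) : Set M := {q | ll q p}

/-- Chronological future of a point: `I⁺(p) = {q | p ≪ q}`. -/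
def Iplus (ll : M → M → Prop) (p : M) : Set M := {q | ll p q}

/-- `I⁻[S] = ⋃_{p ∈ S} I⁻(p)`. -/
def IminusS (ll : M → M → Prop) (S : Set M) : Set M := ⋃ p ∈ S, Iminus ll p

/-- `I⁺[S] = ⋃_{p ∈ S} I⁺(p)`. -/
def IplusS (ll : M → M → Prop) (S : Set M) : Set M := ⋃ p ∈ S, Iplus ll p

/-- A past set is the past of some set. -/
def IsPastSet (ll : M → M → Prop) (P : Set M) : Prop := ∃ S : Set M, P = IminusS ll S

/-- A future set is the future of some set. -/
def IsFutureSet (ll : M → M → Prop) (F : Set M) : Prop := ∃ S : Set M, F = IplusS ll S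

/-- An IP: a nonempty past set that is not the union of two past sets that are
proper subsets of it. -/
def IsIP (ll : M → M → Prop) (P : Set M) : Prop :=
  IsPastSet ll P ∧ P.Nonempty ∧
    ¬ ∃ A B : Set M, IsPastSet ll A ∧ IsPastSet ll B ∧ A ⊂ P ∧ B ⊂ P ∧ P = A ∪ B

/-- An IF: a nonempty future set that is not the union of two future sets that are
proper subsets of it. -/
def IsIF (ll : M → M → Prop) (F : Set M) : Prop :=
  IsFutureSet ll F ∧ F.Nonempty ∧
    ¬ ∃ A B : Set M, IsFutureSet ll A ∧ IsFutureSet ll B ∧ A ⊂ F ∧ B ⊂ F ∧ F = A ∪ B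

/-- The common future `f(P)` of a past set. -/
def commonFuture (ll : M → M → Prop) (P : Set M) : Set M :=
  ⋃ x ∈ {x : M | P ⊆ Iminus ll x}, Iplus ll x

/-- The common past `p(F)` of a future set. -/
def commonPast (ll : M → M → Prop) (F : Set M) : Set M :=
  ⋃ x ∈ {x : M | F ⊆ Iplus ll x}, Iminus ll x

/-- The relation `R_pf`: pairs `(P, P*)` of an IP and an IF, each maximal in the
common future/past of the other. -/
def Rpf (ll : M → M → Prop) : Set (Set M × Set M) :=
  {PP | IsIP ll PP.1 ∧ IsIF ll PP.2 ∧
    PP.2 ⊆ commonFuture ll PP.1 ∧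
    (¬ ∃ R : Set M, IsIF ll R ∧ R ≠ PP.2 ∧ PP.2 ⊆ R ∧ R ⊆ commonFuture ll PP.1) ∧
    PP.1 ⊆ commonPast ll PP.2 ∧
    (¬ ∃ R : Set M, IsIP ll R ∧ R ≠ PP.1 ∧ PP.1 ⊆ R ∧ R ⊆ commonPast ll PP.2)}

/-- The causal completion `M̄`. -/
def Mbar (ll : M → M → Prop) : Set (Set M × Set M) :=
  {PP | PP ∈ Rpf ll ∨
    (PP.1 = ∅ ∧ IsIF ll PP.2 ∧ ¬ ∃ P : Set M, (P, PP.2) ∈ Rpf ll) ∨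
    (PP.2 = ∅ ∧ IsIP ll PP.1 ∧ ¬ ∃ F : Set M, (PP.1, F) ∈ Rpf ll)}

/-- The chronology `≪_C` on pairs: `(P,P*) ≪_C (Q,Q*)` iff `P* ∩ Q ≠ ∅`. -/
def chronC (PP QQ : Set M × Set M) : Prop := (PP.2 ∩ QQ.1).Nonempty

/-- The natural map `Φ : M → M̄`, `Φ(p) = (I⁻(p), I⁺(p))`. -/
def Phi (ll : M → M → Prop) (p : M) : Set M × Set M := (Iminus ll p, Iplus ll p)

/-- The chronology `≪` is dense. -/
def IsDenseChron (ll : M → M → Prop) : Prop := ∀ p q : M, ll p q → ∃ r : M, ll p r ∧ ll r q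

/-- `I⁺_C(P̄) = {R̄ ∈ M̄ : P̄ ≪_C R̄}`. -/
def IplusC (ll : M → M → Prop) (PP : Set M × Set M) : Set (Set M × Set M) :=
  {RR | RR ∈ Mbar ll ∧ chronC PP RR}

/-- `I⁻_C(P̄) = {R̄ ∈ M̄ : R̄ ≪_C P̄}`. -/
def IminusC (ll : M → M → Prop) (PP : Set M × Set M) : Set (Set M × Set M) :=
  {RR | RR ∈ Mbar ll ∧ chronC RR PP}

/-- `I⁺_C(S̄) = {Q̄ ∈ M̄ : ∃ P̄ ∈ S̄, P̄ ≪_C Q̄}`. -/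
def IplusCS (ll : M → M → Prop) (S : Set (Set M × Set M)) : Set (Set M × Set M) :=
  {QQ | QQ ∈ Mbar ll ∧ ∃ PP ∈ S, chronC PP QQ}

/-- `I⁻_C(S̄) = {Q̄ ∈ M̄ : ∃ P̄ ∈ S̄, Q̄ ≪_C P̄}`. -/
def IminusCS (ll : M → M → Prop) (S : Set (Set M × Set M)) : Set (Set M × Set M) :=
  {QQ | QQ ∈ Mbar ll ∧ ∃ PP ∈ S, chronC QQ PP}

/-- The causality `≺_C` defined from the chronology. -/
def causC (ll : M → M → Prop) (PP QQ : Set M × Set M) : Prop :=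
  IminusC ll PP ⊆ IminusC ll QQ ∧ IplusC ll QQ ⊆ IplusC ll PP

/-- The horismos `→_C` defined from `≺_C` and `≪_C`. -/
def horC (ll : M → M → Prop) (PP QQ : Set M × Set M) : Prop :=
  causC ll PP QQ ∧ ¬ chronC PP QQ

/-- `L⁺_IF(S̄) = {Q̄ ∈ M̄ : Q* ≠ ∅ and Q* ⊆ ⋃_{P̄ ∈ S̄} P*}`. -/
def LplusIF (ll : M → M → Prop) (S : Set (Set M × Set M)) : Set (Set M × Set M) :=
  {QQ | QQ ∈ Mbar ll ∧ QQ.2 ≠ ∅ ∧ QQ.2 ⊆ ⋃ PP ∈ S, PP.2}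

/-- `L⁻_IP(S̄) = {Q̄ ∈ M̄ : Q ≠ ∅ and Q ⊆ ⋃_{P̄ ∈ S̄} P}`. -/
def LminusIP (ll : M → M → Prop) (S : Set (Set M × Set M)) : Set (Set M × Set M) :=
  {QQ | QQ ∈ Mbar ll ∧ QQ.1 ≠ ∅ ∧ QQ.1 ⊆ ⋃ PP ∈ S, PP.1}

/-- `Q = lim P_n` for a sequence of past sets. -/
def limPast (ll : M → M → Prop) (Pn : ℕ → Set M) (Q : Set M) : Prop :=
  (∀ x ∈ Q, ∃ N : ℕ, ∀ n > N, x ∈ Pn n) ∧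
  (∀ x : M, ¬ Iminus ll x ⊆ Q → ∃ N : ℕ, ∀ n > N, ¬ Iminus ll x ⊆ Pn n)

/-- `Q = lim F_n` for a sequence of future sets. -/
def limFuture (ll : M → M → Prop) (Fn : ℕ → Set M) (Q : Set M) : Prop :=
  (∀ x ∈ Q, ∃ N : ℕ, ∀ n > N, x ∈ Fn n) ∧
  (∀ x : M, ¬ Iplus ll x ⊆ Q → ∃ N : ℕ, ∀ n > N, ¬ Iplus ll x ⊆ Fn n)

/-- Closure in the future boundary. -/
def ClFB (ll : M → M → Prop) (S : Set (Set M × Set M)) : Set (Set M × Set M) :=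
  S ∪ {QQ | QQ ∈ Mbar ll ∧ QQ.2 = ∅ ∧
        ∃ Pn : ℕ → Set M × Set M, (∀ n, Pn n ∈ S) ∧ limPast ll (fun n => (Pn n).1) QQ.1}

/-- Closure in the past boundary. -/
def ClPB (ll : M → M → Prop) (S : Set (Set M × Set M)) : Set (Set M × Set M) :=
  S ∪ {QQ | QQ ∈ Mbar ll ∧ QQ.1 = ∅ ∧
        ∃ Pn : ℕ → Set M × Set M, (∀ n, Pn n ∈ S) ∧ limFuture ll (fun n => (Pn n).2) QQ.2}

/-- `L⁺(S̄) = Cl_FB[S̄ ∪ L⁺_IF(S̄)]`. -/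
def Lplus (ll : M → M → Prop) (S : Set (Set M × Set M)) : Set (Set M × Set M) :=
  ClFB ll (S ∪ LplusIF ll S)

/-- `L⁻(S̄) = Cl_PB[S̄ ∪ L⁻_IP(S̄)]`. -/
def Lminus (ll : M → M → Prop) (S : Set (Set M × Set M)) : Set (Set M × Set M) :=
  ClPB ll (S ∪ LminusIP ll S)

/-- The topology `T̄` on `M̄`: the coarsest topology in which all the sets
`M̄ \ L⁺(S̄)` and `M̄ \ L⁻(S̄)` are open, for `S̄ ⊆ M̄`. -/
def Tbar (ll : M → M → Prop) : TopologicalSpace ↥(Mbar ll) :=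
  TopologicalSpace.generateFrom
    {U | ∃ S : Set (Set M × Set M), S ⊆ Mbar ll ∧
      (U = (Subtype.val ⁻¹' Lplus ll S)ᶜ ∨ U = (Subtype.val ⁻¹' Lminus ll S)ᶜ)}

/-- The alternative closure `Cl_+`. -/
def ClPlusAlt (ll : M → M → Prop) (X : Set (Set M × Set M)) : Set (Set M × Set M) :=
  X ∪ {QQ | QQ ∈ Mbar ll ∧ QQ.1 ≠ ∅ ∧
        ∃ Pn : ℕ → Set M × Set M, (∀ n, Pn n ∈ X) ∧ limPast ll (fun n => (Pn n).1) QQ.1}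

/-- The alternative closure `Cl_-`. -/
def ClMinusAlt (ll : M → M → Prop) (X : Set (Set M × Set M)) : Set (Set M × Set M) :=
  X ∪ {QQ | QQ ∈ Mbar ll ∧ QQ.2 ≠ ∅ ∧
        ∃ Pn : ℕ → Set M × Set M, (∀ n, Pn n ∈ X) ∧ limFuture ll (fun n => (Pn n).2) QQ.2}

/-- `L_alt⁺(S̄) = Cl_+[L⁺_IF(S̄)]`. -/
def LplusAlt (ll : M → M → Prop) (S : Set (Set M × Set M)) : Set (Set M × Set M) :=
  ClPlusAlt ll (LplusIF ll S)

/-- `L_alt⁻(S̄) = Cl_-[L⁻_IP(S̄)]`. -/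
def LminusAlt (ll : M → M → Prop) (S : Set (Set M × Set M)) : Set (Set M × Set M) :=
  ClMinusAlt ll (LminusIP ll S)

/-- `L_alt(S̄₁,S̄₂) = Cl_+[L⁻_IP(S̄₁) ∩ L⁺_IF(S̄₂)] ∪ Cl_-[L⁻_IP(S̄₁) ∩ L⁺_IF(S̄₂)]`. -/
def LaltPair (ll : M → M → Prop) (S1 S2 : Set (Set M × Set M)) : Set (Set M × Set M) :=
  ClPlusAlt ll (LminusIP ll S1 ∩ LplusIF ll S2) ∪
    ClMinusAlt ll (LminusIP ll S1 ∩ LplusIF ll S2)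

/-- The alternative topology `T̄_alt` on `M̄`. -/
def TbarAlt (ll : M → M → Prop) : TopologicalSpace ↥(Mbar ll) :=
  TopologicalSpace.generateFrom
    {U | (∃ S : Set (Set M × Set M), S ⊆ Mbar ll ∧
        (U = (Subtype.val ⁻¹' LplusAlt ll S)ᶜ ∨ U = (Subtype.val ⁻¹' LminusAlt ll S)ᶜ)) ∨
      (∃ S1 S2 : Set (Set M × Set M), S1 ⊆ Mbar ll ∧ S2 ⊆ Mbar ll ∧
        U = (Subtype.val ⁻¹' LaltPair ll S1 S2)ᶜ)}


lemma isIF_of_mem_Mbar {ll : M → M → Prop} {PP : Set M × Set M}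
    (h : PP ∈ Mbar ll) (h2 : PP.2.Nonempty) : IsIF ll PP.2 := by
  rcases h with h | ⟨_, hIF, _⟩ | ⟨he, _⟩
  · exact h.2.1
  · exact hIF
  · rw [he] at h2; exact absurd h2 Set.not_nonempty_empty

lemma mem_Rpf_of_nonempty {ll : M → M → Prop} {PP : Set M × Set M}
    (h : PP ∈ Mbar ll) (h1 : PP.1.Nonempty) (h2 : PP.2.Nonempty) : PP ∈ Rpf ll := by
  rcases h with h | ⟨he, _⟩ | ⟨he, _⟩
  · exact h
  · rw [he] at h1; exact absurd h1 Set.not_nonempty_empty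
  · rw [he] at h2; exact absurd h2 Set.not_nonempty_empty

lemma future_closed {ll : M → M → Prop}
    (htrans : ∀ p q r : M, ll p q → ll q r → ll p r)
    {F : Set M} (hF : IsFutureSet ll F) {x y : M} (hx : x ∈ F) (hxy : ll x y) : y ∈ F := by
  obtain ⟨S, rfl⟩ := hF
  simp only [IplusS, Set.mem_iUnion, Iplus, Set.mem_setOf_eq] at hx ⊢
  obtain ⟨s, hs, hsx⟩ := hx
  exact ⟨s, hs, htrans _ _ _ hsx hxy⟩

/-- `≪_C` is a chronology on `M̄`: transitive and irreflexive. -/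
theorem chronC_isChronology (ll : M → M → Prop)
    (htrans : ∀ p q r : M, ll p q → ll q r → ll p r)
    (hirr : ∀ p : M, ¬ ll p p) :
    (∀ PP QQ RR : Set M × Set M, PP ∈ Mbar ll → QQ ∈ Mbar ll → RR ∈ Mbar ll →
      chronC PP QQ → chronC QQ RR → chronC PP RR) ∧
    (∀ PP : Set M × Set M, PP ∈ Mbar ll → ¬ chronC PP PP) := by
  have key : ∀ PP QQ : Set M × Set M, QQ ∈ Mbar ll → chronC PP QQ →
      ∀ y ∈ QQ.2, ∃ x ∈ PP.2, ll x y := by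
    intro PP QQ hQ ⟨x, hxP, hxQ⟩ y hy
    have hR : QQ ∈ Rpf ll := mem_Rpf_of_nonempty hQ ⟨x, hxQ⟩ ⟨y, hy⟩
    have := hR.2.2.2.2.1 hxQ
    simp only [commonPast, Set.mem_iUnion, Set.mem_setOf_eq] at this
    obtain ⟨z, hz, hxz⟩ := this
    exact ⟨x, hxP, htrans _ _ _ hxz (hz hy)⟩
  constructor
  · rintro PP QQ RR hP hQ hR h1 ⟨y, hyQ, hyR⟩
    obtain ⟨x, hxP, hxy⟩ := key PP QQ hQ h1 y hyQ
    have hPf : IsFutureSet ll PP.2 := (isIF_of_mem_Mbar hP ⟨x, hxP⟩).1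
    exact ⟨y, future_closed htrans hPf hxP hxy, hyR⟩
  · rintro PP hP h
    obtain ⟨x, hxP2, hxP1⟩ := h
    obtain ⟨w, hwP2, hwx⟩ := key PP PP hP ⟨x, hxP2, hxP1⟩ x hxP2
    have hR : PP ∈ Rpf ll := mem_Rpf_of_nonempty hP ⟨x, hxP1⟩ ⟨x, hxP2⟩
    have := hR.2.2.2.2.1 hxP1
    simp only [commonPast, Set.mem_iUnion, Set.mem_setOf_eq] at this
    obtain ⟨z, hz, hxz⟩ := this
    exact hirr z (htrans _ _ _ (hz hxP2) hxz)
end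

section
/- Assume ≪ is dense. Let P̄ = (P,P*) and Q̄ = (Q,Q*) be elements of M̄, and suppose there exist subsets C₁, C₂ of M, each totally ordered by ≪ (any two distinct elements are related by ≪ in one order or the other), with P* = I⁺[C₁] and Q = I⁻[C₂]. Then P̄ ≪_C Q̄ if and only if there exists a subset C of M, totally ordered by ≪ and containing at least two distinct elements, such that P* = I⁺[C] and Q = I⁻[C]. -/
open Set Topology

variable {M : Type*}

/-- `P̄ ≪_C Q̄` iff there is a timelike curve (a chain with at least two
distinct elements) `C` with `P* = I⁺[C]` and `Q = I⁻[C]`. -/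
theorem chronC_iff_exists_chain (ll : M → M → Prop)
    (htrans : ∀ p q r : M, ll p q → ll q r → ll p r)
    (hirr : ∀ p : M, ¬ ll p p)
    (hdense : IsDenseChron ll)
    (PP QQ : Set M × Set M) (hPP : PP ∈ Mbar ll) (hQQ : QQ ∈ Mbar ll)
    (C1 C2 : Set M) (hC1 : IsChain ll C1) (hC2 : IsChain ll C2)
    (hP2 : PP.2 = IplusS ll C1) (hQ1 : QQ.1 = IminusS ll C2) :
    chronC PP QQ ↔
      ∃ C : Set M, IsChain ll C ∧ (∃ a ∈ C, ∃ b ∈ C, a ≠ b) ∧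
        PP.2 = IplusS ll C ∧ QQ.1 = IminusS ll C := by
  constructor
  · rintro ⟨x, hx2, hx1⟩
    rw [hP2] at hx2
    rw [hQ1] at hx1
    simp only [IplusS, IminusS, mem_iUnion, Iplus, Iminus, mem_setOf_eq] at hx2 hx1
    obtain ⟨a0, ha0, hax⟩ := hx2
    obtain ⟨b0, hb0, hxb⟩ := hx1
    refine ⟨(C1 ∩ Iminus ll x) ∪ (C2 ∩ Iplus ll x), ?_, ?_, ?_, ?_⟩
    · -- chain
      rintro a (⟨ha1, hax'⟩ | ⟨ha2, hxa'⟩) b (⟨hb1, hbx'⟩ | ⟨hb2, hxb'⟩) hab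
      · exact hC1 ha1 hb1 hab
      · exact Or.inl (htrans _ _ _ hax' hxb')
      · exact Or.inr (htrans _ _ _ hbx' hxa')
      · exact hC2 ha2 hb2 hab
    · refine ⟨a0, Or.inl ⟨ha0, hax⟩, b0, Or.inr ⟨hb0, hxb⟩, ?_⟩
      rintro rfl
      exact hirr _ (htrans _ _ _ hax hxb)
    · rw [hP2]
      ext y
      simp only [IplusS, mem_iUnion, Iplus, Iminus, mem_setOf_eq, mem_union, mem_inter_iff]
      constructor
      · rintro ⟨a, ha, hay⟩
        rcases eq_or_ne a a0 with rfl | hne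
        · exact ⟨a, Or.inl ⟨ha, hax⟩, hay⟩
        · rcases hC1 ha ha0 hne with h | h
          · exact ⟨a, Or.inl ⟨ha, htrans _ _ _ h hax⟩, hay⟩
          · exact ⟨a0, Or.inl ⟨ha0, hax⟩, htrans _ _ _ h hay⟩
      · rintro ⟨a, (⟨ha1, _⟩ | ⟨ha2, hxa⟩), hay⟩
        · exact ⟨a, ha1, hay⟩
        · exact ⟨a0, ha0, htrans _ _ _ hax (htrans _ _ _ hxa hay)⟩
    · rw [hQ1]
      ext y
      simp only [IminusS, mem_iUnion, Iplus, Iminus, mem_setOf_eq, mem_union, mem_inter_iff]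
      constructor
      · rintro ⟨b, hb, hyb⟩
        rcases eq_or_ne b b0 with rfl | hne
        · exact ⟨b, Or.inr ⟨hb, hxb⟩, hyb⟩
        · rcases hC2 hb hb0 hne with h | h
          · exact ⟨b0, Or.inr ⟨hb0, hxb⟩, htrans _ _ _ hyb h⟩
          · exact ⟨b, Or.inr ⟨hb, htrans _ _ _ hxb h⟩, hyb⟩
      · rintro ⟨b, (⟨hb1, hbx⟩ | ⟨hb2, _⟩), hyb⟩
        · exact ⟨b0, hb0, htrans _ _ _ (htrans _ _ _ hyb hbx) hxb⟩
        · exact ⟨b, hb2, hyb⟩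
  · rintro ⟨C, hC, ⟨a, ha, b, hb, hab⟩, hP2', hQ1'⟩
    have key : ∀ u v : M, u ∈ C → v ∈ C → ll u v → chronC PP QQ := by
      intro u v hu hv huv
      obtain ⟨r, hur, hrv⟩ := hdense u v huv
      refine ⟨r, ?_, ?_⟩
      · rw [hP2']
        exact mem_iUnion₂.2 ⟨u, hu, hur⟩
      · rw [hQ1']
        exact mem_iUnion₂.2 ⟨v, hv, hrv⟩
    rcases hC ha hb hab with h | h
    · exact key a b ha hb h
    · exact key b a hb ha h
end

section
/- Assume ≪ is dense and that (I⁻(p), I⁺(p)) ∈ R_pf for every p ∈ M. For P̄ ∈ M̄ write I⁺_C(P̄) = {R̄ ∈ M̄ : P̄ ≪_C R̄} and I⁻_C(P̄) = {R̄ ∈ M̄ : R̄ ≪_C P̄}. Then ≪_C is weakly distinguishing: for all P̄, Q̄ ∈ M̄, I⁺_C(P̄) = I⁺_C(Q̄) and I⁻_C(P̄) = I⁻_C(Q̄) hold if and only if P̄ = Q̄. -/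
open Set Topology

variable {M : Type*}

lemma pastSet_mem_iff' (ll : M → M → Prop)
    (htrans : ∀ p q r : M, ll p q → ll q r → ll p r)
    (hdense : IsDenseChron ll) {P : Set M} (hP : IsPastSet ll P) (q : M) :
    q ∈ P ↔ ∃ x ∈ P, ll q x := by
  obtain ⟨S, rfl⟩ := hP
  constructor
  · intro hq
    simp only [IminusS, mem_iUnion, Iminus, mem_setOf_eq] at hq
    obtain ⟨s, hs, hqs⟩ := hq
    obtain ⟨r, hqr, hrs⟩ := hdense q s hqs
    refine ⟨r, ?_, hqr⟩
    simp only [IminusS, mem_iUnion, Iminus, mem_setOf_eq]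
    exact ⟨s, hs, hrs⟩
  · rintro ⟨x, hx, hqx⟩
    simp only [IminusS, mem_iUnion, Iminus, mem_setOf_eq] at hx ⊢
    obtain ⟨s, hs, hxs⟩ := hx
    exact ⟨s, hs, htrans q x s hqx hxs⟩

lemma futureSet_mem_iff' (ll : M → M → Prop)
    (htrans : ∀ p q r : M, ll p q → ll q r → ll p r)
    (hdense : IsDenseChron ll) {F : Set M} (hF : IsFutureSet ll F) (q : M) :
    q ∈ F ↔ ∃ x ∈ F, ll x q := by
  obtain ⟨S, rfl⟩ := hF
  constructor
  · intro hq
    simp only [IplusS, mem_iUnion, Iplus, mem_setOf_eq] at hq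
    obtain ⟨s, hs, hqs⟩ := hq
    obtain ⟨r, hsr, hrq⟩ := hdense s q hqs
    refine ⟨r, ?_, hrq⟩
    simp only [IplusS, mem_iUnion, Iplus, mem_setOf_eq]
    exact ⟨s, hs, hsr⟩
  · rintro ⟨x, hx, hxq⟩
    simp only [IplusS, mem_iUnion, Iplus, mem_setOf_eq] at hx ⊢
    obtain ⟨s, hs, hsx⟩ := hx
    exact ⟨s, hs, htrans s x q hsx hxq⟩

lemma mbar_components (ll : M → M → Prop) {PP : Set M × Set M} (h : PP ∈ Mbar ll) :
    IsPastSet ll PP.1 ∧ IsFutureSet ll PP.2 := by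
  have hemptyP : IsPastSet ll (∅ : Set M) :=
    ⟨∅, by ext x; simp [IminusS]⟩
  have hemptyF : IsFutureSet ll (∅ : Set M) :=
    ⟨∅, by ext x; simp [IplusS]⟩
  rcases h with h | h | h
  · exact ⟨h.1.1, h.2.1.1⟩
  · exact ⟨h.1 ▸ hemptyP, h.2.1.1⟩
  · exact ⟨h.2.1.1, h.1 ▸ hemptyF⟩

/-- `≪_C` is weakly distinguishing on `M̄`. -/
theorem chronC_weakly_distinguishing (ll : M → M → Prop)
    (htrans : ∀ p q r : M, ll p q → ll q r → ll p r)
    (hirr : ∀ p : M, ¬ ll p p)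
    (hdense : IsDenseChron ll)
    (hphi : ∀ p : M, Phi ll p ∈ Rpf ll) :
    ∀ PP QQ : Set M × Set M, PP ∈ Mbar ll → QQ ∈ Mbar ll →
      ((IplusC ll PP = IplusC ll QQ ∧ IminusC ll PP = IminusC ll QQ) ↔ PP = QQ) := by
  intro PP QQ hPP hQQ
  constructor
  · rintro ⟨hplus, hminus⟩
    obtain ⟨hP1, hP2⟩ := mbar_components ll hPP
    obtain ⟨hQ1, hQ2⟩ := mbar_components ll hQQ
    have hPhiMbar : ∀ q, Phi ll q ∈ Mbar ll := fun q => Or.inl (hphi q)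
    have h1 : PP.1 = QQ.1 := by
      ext q
      have key0 := Set.ext_iff.mp hminus (Phi ll q)
      simp only [IminusC, mem_setOf_eq] at key0
      have hm := hPhiMbar q
      have key : chronC (Phi ll q) PP ↔ chronC (Phi ll q) QQ :=
        ⟨fun h => (key0.mp ⟨hm, h⟩).2, fun h => (key0.mpr ⟨hm, h⟩).2⟩
      simp only [chronC, Phi, Set.Nonempty, mem_inter_iff, Iplus, mem_setOf_eq] at key
      rw [pastSet_mem_iff' ll htrans hdense hP1 q,
        pastSet_mem_iff' ll htrans hdense hQ1 q]
      constructor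
      · rintro ⟨x, hx, hqx⟩
        obtain ⟨y, hy1, hy2⟩ := key.mp ⟨x, hqx, hx⟩
        exact ⟨y, hy2, hy1⟩
      · rintro ⟨x, hx, hqx⟩
        obtain ⟨y, hy1, hy2⟩ := key.mpr ⟨x, hqx, hx⟩
        exact ⟨y, hy2, hy1⟩
    have h2 : PP.2 = QQ.2 := by
      ext q
      have key0 := Set.ext_iff.mp hplus (Phi ll q)
      simp only [IplusC, mem_setOf_eq] at key0
      have hm := hPhiMbar q
      have key : chronC PP (Phi ll q) ↔ chronC QQ (Phi ll q) :=
        ⟨fun h => (key0.mp ⟨hm, h⟩).2, fun h => (key0.mpr ⟨hm, h⟩).2⟩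
      simp only [chronC, Phi, Set.Nonempty, mem_inter_iff, Iminus, mem_setOf_eq] at key
      rw [futureSet_mem_iff' ll htrans hdense hP2 q,
        futureSet_mem_iff' ll htrans hdense hQ2 q]
      constructor
      · rintro ⟨x, hx, hxq⟩
        obtain ⟨y, hy1, hy2⟩ := key.mp ⟨x, hx, hxq⟩
        exact ⟨y, hy1, hy2⟩
      · rintro ⟨x, hx, hxq⟩
        obtain ⟨y, hy1, hy2⟩ := key.mpr ⟨x, hx, hxq⟩
        exact ⟨y, hy1, hy2⟩
    exact Prod.ext h1 h2
  · rintro rfl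
    exact ⟨rfl, rfl⟩
end

section
/- Assume ≪ is dense and that (I⁻(p), I⁺(p)) ∈ R_pf for every p ∈ M. Define P̄ ≺_C Q̄ iff I⁻_C(P̄) ⊆ I⁻_C(Q̄) and I⁺_C(P̄) ⊇ I⁺_C(Q̄), and define P̄ →_C Q̄ iff P̄ ≺_C Q̄ and not P̄ ≪_C Q̄. Then (M̄, ≺_C, ≪_C, →_C) is a causal space in the sense of Kronheimer–Penrose: (1) ≺_C is reflexive; (2) ≺_C is transitive; (3) ≺_C is antisymmetric (P̄ ≺_C Q̄ and Q̄ ≺_C P̄ imply P̄ = Q̄); (4) ≪_C is irreflexive; (5) P̄ ≺_C Q̄ and Q̄ ≪_C R̄ imply P̄ ≪_C R̄; (6) P̄ ≪_C Q̄ and Q̄ ≺_C R̄ imply P̄ ≪_C R̄; (7) P̄ →_C Q̄ iff P̄ ≺_C Q̄ and not P̄ ≪_C Q̄. -/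
open Set Topology

variable {M : Type*}

lemma pastSet_lower {ll : M → M → Prop} (htrans : ∀ p q r : M, ll p q → ll q r → ll p r)
    {P : Set M} (hP : IsPastSet ll P) {x y : M} (hxy : ll x y) (hy : y ∈ P) : x ∈ P := by
  obtain ⟨S, rfl⟩ := hP
  simp only [IminusS, Iminus, mem_iUnion, mem_setOf_eq] at *
  obtain ⟨s, hs, hys⟩ := hy
  exact ⟨s, hs, htrans _ _ _ hxy hys⟩

lemma futureSet_upper {ll : M → M → Prop} (htrans : ∀ p q r : M, ll p q → ll q r → ll p r)
    {F : Set M} (hF : IsFutureSet ll F) {x y : M} (hxy : ll x y) (hx : x ∈ F) : y ∈ F := by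
  obtain ⟨S, rfl⟩ := hF
  simp only [IplusS, Iplus, mem_iUnion, mem_setOf_eq] at *
  obtain ⟨s, hs, hsx⟩ := hx
  exact ⟨s, hs, htrans _ _ _ hsx hxy⟩

lemma pastSet_dense {ll : M → M → Prop} (hdense : IsDenseChron ll)
    {P : Set M} (hP : IsPastSet ll P) {x : M} (hx : x ∈ P) : ∃ r, ll x r ∧ r ∈ P := by
  obtain ⟨S, rfl⟩ := hP
  simp only [IminusS, Iminus, mem_iUnion, mem_setOf_eq] at *
  obtain ⟨s, hs, hxs⟩ := hx
  obtain ⟨r, hxr, hrs⟩ := hdense _ _ hxs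
  exact ⟨r, hxr, s, hs, hrs⟩

lemma futureSet_dense {ll : M → M → Prop} (hdense : IsDenseChron ll)
    {F : Set M} (hF : IsFutureSet ll F) {x : M} (hx : x ∈ F) : ∃ r, ll r x ∧ r ∈ F := by
  obtain ⟨S, rfl⟩ := hF
  simp only [IplusS, Iplus, mem_iUnion, mem_setOf_eq] at *
  obtain ⟨s, hs, hsx⟩ := hx
  obtain ⟨r, hsr, hrx⟩ := hdense _ _ hsx
  exact ⟨r, hrx, s, hs, hsr⟩

lemma Mbar_fst_pastSet {ll : M → M → Prop} {PP : Set M × Set M}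
    (hPP : PP ∈ Mbar ll) : IsPastSet ll PP.1 := by
  rcases hPP with h | h | h
  · exact h.1.1
  · exact h.1 ▸ ⟨∅, by simp [IminusS]⟩
  · exact h.2.1.1

lemma Mbar_snd_futureSet {ll : M → M → Prop} {PP : Set M × Set M}
    (hPP : PP ∈ Mbar ll) : IsFutureSet ll PP.2 := by
  rcases hPP with h | h | h
  · exact h.2.1.1
  · exact h.2.1.1
  · exact h.1 ▸ ⟨∅, by simp [IplusS]⟩

lemma Mbar_not_chronC_self {ll : M → M → Prop}
    (htrans : ∀ p q r : M, ll p q → ll q r → ll p r) (hirr : ∀ p : M, ¬ ll p p)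
    {PP : Set M × Set M} (hPP : PP ∈ Mbar ll) : ¬ chronC PP PP := by
  rintro ⟨x, hxF, hxP⟩
  rcases hPP with h | h | h
  · have hx : x ∈ commonFuture ll PP.1 := h.2.2.1 hxF
    simp only [commonFuture, mem_iUnion, mem_setOf_eq] at hx
    obtain ⟨z, hz, hzx⟩ := hx
    exact hirr x (htrans _ _ _ (hz hxP) hzx)
  · rw [h.1] at hxP; exact hxP
  · rw [h.1] at hxF; exact hxF

lemma Mbar_fst_char {ll : M → M → Prop}
    (htrans : ∀ p q r : M, ll p q → ll q r → ll p r)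
    (hdense : IsDenseChron ll) (hphi : ∀ p : M, Phi ll p ∈ Rpf ll)
    {PP : Set M × Set M} (hPP : PP ∈ Mbar ll) :
    PP.1 = {x | Phi ll x ∈ IminusC ll PP} := by
  ext x
  constructor
  · intro hx
    obtain ⟨r, hxr, hr⟩ := pastSet_dense hdense (Mbar_fst_pastSet hPP) hx
    exact ⟨Or.inl (hphi x), r, hxr, hr⟩
  · rintro ⟨-, w, hw, hwP⟩
    exact pastSet_lower htrans (Mbar_fst_pastSet hPP) hw hwP

lemma Mbar_snd_char {ll : M → M → Prop}
    (htrans : ∀ p q r : M, ll p q → ll q r → ll p r)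
    (hdense : IsDenseChron ll) (hphi : ∀ p : M, Phi ll p ∈ Rpf ll)
    {PP : Set M × Set M} (hPP : PP ∈ Mbar ll) :
    PP.2 = {x | Phi ll x ∈ IplusC ll PP} := by
  ext x
  constructor
  · intro hx
    obtain ⟨r, hrx, hr⟩ := futureSet_dense hdense (Mbar_snd_futureSet hPP) hx
    exact ⟨Or.inl (hphi x), r, hr, hrx⟩
  · rintro ⟨-, w, hwF, hw⟩
    exact futureSet_upper htrans (Mbar_snd_futureSet hPP) hw hwF

/-- `(M̄, ≺_C, ≪_C, →_C)` is a causal space in the sense of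
Kronheimer–Penrose. -/
theorem Mbar_isCausalSpace (ll : M → M → Prop)
    (htrans : ∀ p q r : M, ll p q → ll q r → ll p r)
    (hirr : ∀ p : M, ¬ ll p p)
    (hdense : IsDenseChron ll)
    (hphi : ∀ p : M, Phi ll p ∈ Rpf ll) :
    (∀ PP ∈ Mbar ll, causC ll PP PP) ∧
    (∀ PP ∈ Mbar ll, ∀ QQ ∈ Mbar ll, ∀ RR ∈ Mbar ll,
      causC ll PP QQ → causC ll QQ RR → causC ll PP RR) ∧
    (∀ PP ∈ Mbar ll, ∀ QQ ∈ Mbar ll, causC ll PP QQ → causC ll QQ PP → PP = QQ) ∧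
    (∀ PP ∈ Mbar ll, ¬ chronC PP PP) ∧
    (∀ PP ∈ Mbar ll, ∀ QQ ∈ Mbar ll, ∀ RR ∈ Mbar ll,
      causC ll PP QQ → chronC QQ RR → chronC PP RR) ∧
    (∀ PP ∈ Mbar ll, ∀ QQ ∈ Mbar ll, ∀ RR ∈ Mbar ll,
      chronC PP QQ → causC ll QQ RR → chronC PP RR) ∧
    (∀ PP ∈ Mbar ll, ∀ QQ ∈ Mbar ll,
      (horC ll PP QQ ↔ causC ll PP QQ ∧ ¬ chronC PP QQ)) := by
  refine ⟨fun PP _ => ⟨subset_rfl, subset_rfl⟩,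
    fun PP _ QQ _ RR _ h1 h2 => ⟨h1.1.trans h2.1, h2.2.trans h1.2⟩,
    ?_, fun PP hPP => Mbar_not_chronC_self htrans hirr hPP, ?_, ?_,
    fun PP _ QQ _ => Iff.rfl⟩
  · intro PP hPP QQ hQQ h1 h2
    have hm : IminusC ll PP = IminusC ll QQ := subset_antisymm h1.1 h2.1
    have hp : IplusC ll PP = IplusC ll QQ := subset_antisymm h2.2 h1.2
    have e1 : PP.1 = QQ.1 := by
      rw [Mbar_fst_char htrans hdense hphi hPP, Mbar_fst_char htrans hdense hphi hQQ, hm]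
    have e2 : PP.2 = QQ.2 := by
      rw [Mbar_snd_char htrans hdense hphi hPP, Mbar_snd_char htrans hdense hphi hQQ, hp]
    exact Prod.ext e1 e2
  · intro PP hPP QQ hQQ RR hRR hc ⟨x, hxQ, hxR⟩
    obtain ⟨r, hrx, hr⟩ := futureSet_dense hdense (Mbar_snd_futureSet hQQ) hxQ
    have hmem : Phi ll x ∈ IplusC ll PP := hc.2 ⟨Or.inl (hphi x), r, hr, hrx⟩
    obtain ⟨-, w, hwP, hwx⟩ := hmem
    exact ⟨w, hwP, pastSet_lower htrans (Mbar_fst_pastSet hRR) hwx hxR⟩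
  · intro PP hPP QQ hQQ RR hRR ⟨x, hxP, hxQ⟩ hc
    obtain ⟨r, hxr, hr⟩ := pastSet_dense hdense (Mbar_fst_pastSet hQQ) hxQ
    have hmem : Phi ll x ∈ IminusC ll RR := hc.1 ⟨Or.inl (hphi x), r, hxr, hr⟩
    obtain ⟨-, w, hxw, hwR⟩ := hmem
    exact ⟨w, futureSet_upper htrans (Mbar_snd_futureSet hPP) hxw hxP, hwR⟩
end

section
/- Assume ≪ is dense. For IPs P and Q, define P ≪_IP Q iff P ⊆ I⁻(q) for some q ∈ Q. Then P ≪_IP Q if and only if f(P) ∩ Q ≠ ∅. -/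
open Set Topology

variable {M : Type*}

/-- for IPs `P`, `Q`: `P ≪_IP Q` (i.e. `P ⊆ I⁻(q)` for some `q ∈ Q`)
iff `f(P) ∩ Q ≠ ∅`. -/
theorem llIP_iff_commonFuture_inter (ll : M → M → Prop)
    (htrans : ∀ p q r : M, ll p q → ll q r → ll p r)
    (hirr : ∀ p : M, ¬ ll p p)
    (hdense : IsDenseChron ll)
    (P Q : Set M) (hP : IsIP ll P) (hQ : IsIP ll Q) :
    (∃ q ∈ Q, P ⊆ Iminus ll q) ↔ (commonFuture ll P ∩ Q).Nonempty := by
  constructor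
  · rintro ⟨q, hqQ, hPq⟩
    -- Q is a past set, so q ≪ s for some s with I⁻(s) ⊆ Q (in fact s ∈ S)
    obtain ⟨S, hS⟩ := hP.1
    obtain ⟨SQ, hSQ⟩ := hQ.1
    have hq' : q ∈ IminusS ll SQ := hSQ ▸ hqQ
    obtain ⟨s, hsS, hqs⟩ := by
      simpa [IminusS, Iminus, Set.mem_iUnion] using hq'
    obtain ⟨r, hqr, hrs⟩ := hdense q s hqs
    refine ⟨r, ?_, ?_⟩
    · -- r ∈ commonFuture via witness q
      refine Set.mem_iUnion.2 ⟨q, Set.mem_iUnion.2 ⟨hPq, hqr⟩⟩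
    · -- r ∈ Q since r ≪ s, s ∈ SQ
      rw [hSQ]
      exact Set.mem_iUnion.2 ⟨s, Set.mem_iUnion.2 ⟨hsS, hrs⟩⟩
  · rintro ⟨x, hxF, hxQ⟩
    obtain ⟨y, hy⟩ := Set.mem_iUnion.1 hxF
    obtain ⟨hPy, hyx⟩ := Set.mem_iUnion.1 hy
    exact ⟨x, hxQ, fun p hp => htrans p y x (hPy hp) hyx⟩
end

section
/- For any S̄ ⊆ M̄, let I⁺_C(S̄) = {Q̄ ∈ M̄ : ∃P̄ ∈ S̄, P̄ ≪_C Q̄} and let S̄⁺ = M̄ \ I⁺_C(S̄). Then I⁺_C(S̄) = M̄ \ L⁻(S̄⁺); consequently I⁺_C(S̄), and dually I⁻_C(S̄), is open in the topology T̄ for every S̄ ⊆ M̄. -/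
open Set Topology

variable {M : Type*}

/-- `I⁺_C(S̄) = M̄ \ L⁻(S̄⁺)` where `S̄⁺ = M̄ \ I⁺_C(S̄)`; consequently
`I⁺_C(S̄)` and dually `I⁻_C(S̄)` are open in the topology `T̄`. -/
theorem IplusCS_open (ll : M → M → Prop)
    (htrans : ∀ p q r : M, ll p q → ll q r → ll p r)
    (hirr : ∀ p : M, ¬ ll p p)
    (S : Set (Set M × Set M)) (hS : S ⊆ Mbar ll) :
    IplusCS ll S = Mbar ll \ Lminus ll (Mbar ll \ IplusCS ll S) ∧
    IsOpen[Tbar ll] (Subtype.val ⁻¹' IplusCS ll S) ∧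
    IsOpen[Tbar ll] (Subtype.val ⁻¹' IminusCS ll S) := by
  have hEq : IplusCS ll S = Mbar ll \ Lminus ll (Mbar ll \ IplusCS ll S) := by
    ext QQ
    constructor
    · rintro ⟨hQM, PP, hPS, x, hxP2, hxQ1⟩
      refine ⟨hQM, ?_⟩
      rintro ((h | h) | h)
      · exact h.2 ⟨hQM, PP, hPS, x, hxP2, hxQ1⟩
      · rcases h with ⟨_, _, hsub⟩
        have hx := hsub hxQ1
        simp only [mem_iUnion, exists_prop] at hx
        rcases hx with ⟨RR, hRB, hxR⟩
        exact hRB.2 ⟨hRB.1, PP, hPS, x, hxP2, hxR⟩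
      · rcases h with ⟨_, hQ1, _⟩
        rw [hQ1] at hxQ1
        exact hxQ1
    · rintro ⟨hQM, hnL⟩
      by_contra hA
      exact hnL (Or.inl (Or.inl ⟨hQM, hA⟩))
  have hEq' : IminusCS ll S = Mbar ll \ Lplus ll (Mbar ll \ IminusCS ll S) := by
    ext QQ
    constructor
    · rintro ⟨hQM, PP, hPS, x, hxQ2, hxP1⟩
      refine ⟨hQM, ?_⟩
      rintro ((h | h) | h)
      · exact h.2 ⟨hQM, PP, hPS, x, hxQ2, hxP1⟩
      · rcases h with ⟨_, _, hsub⟩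
        have hx := hsub hxQ2
        simp only [mem_iUnion, exists_prop] at hx
        rcases hx with ⟨RR, hRB, hxR⟩
        exact hRB.2 ⟨hRB.1, PP, hPS, x, hxR, hxP1⟩
      · rcases h with ⟨_, hQ2, _⟩
        rw [hQ2] at hxQ2
        exact hxQ2
    · rintro ⟨hQM, hnL⟩
      by_contra hA
      exact hnL (Or.inl (Or.inl ⟨hQM, hA⟩))
  refine ⟨hEq, ?_, ?_⟩
  · have hpre : (Subtype.val : ↥(Mbar ll) → Set M × Set M) ⁻¹' IplusCS ll S =
        (Subtype.val ⁻¹' Lminus ll (Mbar ll \ IplusCS ll S))ᶜ := by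
      ext q
      simp only [mem_preimage, mem_compl_iff]
      constructor
      · intro h
        exact (hEq ▸ h).2
      · intro h
        have : (q : Set M × Set M) ∈ Mbar ll \ Lminus ll (Mbar ll \ IplusCS ll S) := ⟨q.2, h⟩
        rw [← hEq] at this
        exact this
    rw [hpre]
    exact TopologicalSpace.GenerateOpen.basic _
      ⟨Mbar ll \ IplusCS ll S, diff_subset, Or.inr rfl⟩
  · have hpre : (Subtype.val : ↥(Mbar ll) → Set M × Set M) ⁻¹' IminusCS ll S =
        (Subtype.val ⁻¹' Lplus ll (Mbar ll \ IminusCS ll S))ᶜ := by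
      ext q
      simp only [mem_preimage, mem_compl_iff]
      constructor
      · intro h
        exact (hEq' ▸ h).2
      · intro h
        have : (q : Set M × Set M) ∈ Mbar ll \ Lplus ll (Mbar ll \ IminusCS ll S) := ⟨q.2, h⟩
        rw [← hEq'] at this
        exact this
    rw [hpre]
    exact TopologicalSpace.GenerateOpen.basic _
      ⟨Mbar ll \ IminusCS ll S, diff_subset, Or.inl rfl⟩
end

section
/- Assume ≪ is dense. Let (P_n) be a sequence of past sets, and let Q and R be past sets with Q = lim P_n and R = lim P_n. Then Q = R; that is, limits of sequences of past sets are unique. -/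
open Set Topology

variable {M : Type*}

/-- for dense `≪`, limits of sequences of past sets are unique. -/
theorem limPast_unique (ll : M → M → Prop)
    (htrans : ∀ p q r : M, ll p q → ll q r → ll p r)
    (hirr : ∀ p : M, ¬ ll p p)
    (hdense : IsDenseChron ll)
    (Pn : ℕ → Set M) (hPn : ∀ n, IsPastSet ll (Pn n))
    (Q R : Set M) (hQ : IsPastSet ll Q) (hR : IsPastSet ll R)
    (hlimQ : limPast ll Pn Q) (hlimR : limPast ll Pn R) :
    Q = R := by
  -- past sets are downward closed
  have down : ∀ P : Set M, IsPastSet ll P → ∀ y ∈ P, Iminus ll y ⊆ P := by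
    rintro P ⟨S, rfl⟩ y hy z hz
    simp only [IminusS, Set.mem_iUnion, Iminus, Set.mem_setOf_eq] at hy ⊢
    obtain ⟨p, hp, hyp⟩ := hy
    exact ⟨p, hp, htrans z y p hz hyp⟩
  -- key lemma: one inclusion
  have key : ∀ A B : Set M, IsPastSet ll A → limPast ll Pn A → limPast ll Pn B →
      A ⊆ B := by
    intro A B hA hlA hlB x hx
    by_contra hxB
    -- find y ∈ A with x ≪ y
    obtain ⟨S, rfl⟩ := hA
    simp only [IminusS, Set.mem_iUnion, Iminus, Set.mem_setOf_eq] at hx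
    obtain ⟨p, hp, hxp⟩ := hx
    obtain ⟨y, hxy, hyp⟩ := hdense x p hxp
    have hyA : y ∈ IminusS ll S := by
      simp only [IminusS, Set.mem_iUnion, Iminus, Set.mem_setOf_eq]
      exact ⟨p, hp, hyp⟩
    have hnsub : ¬ Iminus ll y ⊆ B := fun h => hxB (h hxy)
    obtain ⟨N1, h1⟩ := hlB.2 y hnsub
    obtain ⟨N2, h2⟩ := hlA.1 y hyA
    have hn : max N1 N2 + 1 > N1 := lt_of_le_of_lt (le_max_left _ _) (Nat.lt_succ_self _)
    have hn2 : max N1 N2 + 1 > N2 := lt_of_le_of_lt (le_max_right _ _) (Nat.lt_succ_self _)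
    exact h1 _ hn (down _ (hPn _) y (h2 _ hn2))
  exact Set.Subset.antisymm (key Q R hQ hlimQ hlimR) (key R Q hR hlimR hlimQ)
end

section
/- Assume (I⁻(p), I⁺(p)) ∈ R_pf for every p ∈ M. Let (x_n) be a sequence in M with x_n ≪ x_{n+1} for all n, let P = ⋃_n I⁻(x_n), and suppose P̄ = (P,P*) ∈ M̄. If Φ(x_m) ∈ L⁺(S̄) for some m and some S̄ ⊆ M̄, then P̄ ∈ L⁺(S̄). -/
open Set Topology

variable {M : Type*}

/-- if `Φ(x_m) ∈ L⁺(S̄)` for some point `x_m` of a future-directed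
chain `(x_n)` generating the past `P` of `P̄ ∈ M̄`, then `P̄ ∈ L⁺(S̄)`. -/
theorem mem_Lplus_of_chain (ll : M → M → Prop)
    (htrans : ∀ p q r : M, ll p q → ll q r → ll p r)
    (hirr : ∀ p : M, ¬ ll p p)
    (hphi : ∀ p : M, Phi ll p ∈ Rpf ll)
    (x : ℕ → M) (hx : ∀ n, ll (x n) (x (n + 1)))
    (PP : Set M × Set M) (hPP : PP ∈ Mbar ll)
    (hP1 : PP.1 = ⋃ n, Iminus ll (x n))
    (m : ℕ) (S : Set (Set M × Set M)) (hS : S ⊆ Mbar ll)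
    (hmem : Phi ll (x m) ∈ Lplus ll S) :
    PP ∈ Lplus ll S := by
  -- chain lemma
  have hchain' : ∀ d k : ℕ, ll (x k) (x (k + d + 1)) := by
    intro d
    induction d with
    | zero => intro k; exact hx k
    | succ d ih => intro k; exact htrans _ _ _ (ih k) (hx (k + d + 1))
  have hchain : ∀ k j : ℕ, k < j → ll (x k) (x j) := by
    intro k j hkj
    obtain ⟨d, rfl⟩ : ∃ d, j = k + d + 1 := ⟨j - k - 1, by omega⟩
    exact hchain' d k
  -- x m ∈ PP.1
  have hxmP : x m ∈ PP.1 := by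
    rw [hP1]
    exact Set.mem_iUnion.mpr ⟨m + 1, hx m⟩
  -- Φ(x m) has nonempty future
  have hne : (Phi ll (x m)).2.Nonempty := ⟨x (m + 1), hx m⟩
  -- From hmem, I⁺(x m) ⊆ ⋃ P̄ ∈ S, P̄.2
  have hsub : Iplus ll (x m) ⊆ ⋃ QQ ∈ S, QQ.2 := by
    rcases hmem with h | h
    · rcases h with h | h
      · intro y hy
        exact Set.mem_biUnion h hy
      · exact h.2.2
    · exact absurd h.2.1 (Set.nonempty_iff_ne_empty.mp hne)
  rcases hPP with hrpf | hcase | hcase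
  · -- PP ∈ Rpf: PP.2 ⊆ commonFuture PP.1 ⊆ I⁺(x m)
    have hcf : commonFuture ll PP.1 ⊆ Iplus ll (x m) := by
      intro y hy
      rcases Set.mem_iUnion₂.mp hy with ⟨z, hz, hzy⟩
      exact htrans _ _ _ (hz hxmP) hzy
    left; right
    refine ⟨Or.inl hrpf, ?_, fun y hy => hsub (hcf (hrpf.2.2.1 hy))⟩
    exact Set.nonempty_iff_ne_empty.mp hrpf.2.1.2.1
  · -- PP.1 = ∅: contradiction
    exact absurd hcase.1 (Set.nonempty_iff_ne_empty.mp ⟨x m, hxmP⟩)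
  · -- PP.2 = ∅: use ClFB with the sequence Φ(x (n + m + 1))
    right
    refine ⟨Or.inr (Or.inr hcase), hcase.1, fun n => Phi ll (x (n + m + 1)), ?_, ?_, ?_⟩
    · intro n
      right
      refine ⟨Or.inl (hphi _), Set.nonempty_iff_ne_empty.mp ⟨x (n + m + 2), hx _⟩, ?_⟩
      intro y hy
      exact hsub (htrans _ _ _ (hchain m (n + m + 1) (by omega)) hy)
    · intro y hy
      rw [hP1] at hy
      rcases Set.mem_iUnion.mp hy with ⟨k, hk⟩
      refine ⟨k, fun n hn => ?_⟩
      exact htrans _ _ _ hk (hchain k (n + m + 1) (by omega))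
    · intro y hy
      refine ⟨0, fun n _ hsub' => hy ?_⟩
      intro z hz
      rw [hP1]
      exact Set.mem_iUnion.mpr ⟨n + m + 1, hsub' hz⟩
end

section
/- Assume (I⁻(p), I⁺(p)) ∈ R_pf for every p ∈ M. Let (x_n) be a sequence in M with x_n ≪ x_{n+1} for all n, let P = ⋃_n I⁻(x_n), and suppose P̄ = (P,P*) ∈ M̄. Then the sequence Φ(x_n) converges to P̄ in the topology T̄: every T̄-open set containing P̄ contains Φ(x_n) for all sufficiently large n. -/
open Set Topology

variable {M : Type*}

/-- the sequence `Φ(x_n)` along a future-directed chain generating the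
past of `P̄ ∈ M̄` converges to `P̄` in the topology `T̄`. -/
theorem chain_converges (ll : M → M → Prop)
    (htrans : ∀ p q r : M, ll p q → ll q r → ll p r)
    (hirr : ∀ p : M, ¬ ll p p)
    (hphi : ∀ p : M, Phi ll p ∈ Rpf ll)
    (x : ℕ → M) (hx : ∀ n, ll (x n) (x (n + 1)))
    (PP : Set M × Set M) (hPP : PP ∈ Mbar ll)
    (hP1 : PP.1 = ⋃ n, Iminus ll (x n)) :
    ∀ U : Set ↥(Mbar ll), IsOpen[Tbar ll] U → (⟨PP, hPP⟩ : ↥(Mbar ll)) ∈ U →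
      ∃ N : ℕ, ∀ n ≥ N,
        (⟨Phi ll (x n), Or.inl (hphi (x n))⟩ : ↥(Mbar ll)) ∈ U := by
  -- basic chain facts
  have hlt : ∀ m n : ℕ, m < n → ll (x m) (x n) := by
    intro m n h
    induction n with
    | zero => omega
    | succ k ih =>
      rcases Nat.lt_succ_iff_lt_or_eq.mp h with h' | h'
      · exact htrans _ _ _ (ih h') (hx k)
      · subst h'; exact hx m
  have hmono : ∀ m n : ℕ, m ≤ n → Iminus ll (x m) ⊆ Iminus ll (x n) := by
    intro m n hmn q hq
    rcases eq_or_lt_of_le hmn with rfl | h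
    · exact hq
    · exact htrans _ _ _ hq (hlt m n h)
  have hxP : ∀ n, x n ∈ PP.1 := by
    intro n; rw [hP1]; exact mem_iUnion.mpr ⟨n + 1, hx n⟩
  have hsubP : ∀ n, Iminus ll (x n) ⊆ PP.1 := by
    intro n; rw [hP1]; exact subset_iUnion (fun n => Iminus ll (x n)) n
  have hP1ne : PP.1 ≠ ∅ := fun h => (h ▸ hxP 0 : x 0 ∈ (∅ : Set M))
  -- key lemma for L⁺
  have keyA : ∀ S : Set (Set M × Set M),
      (∀ N : ℕ, ∃ n ≥ N, Phi ll (x n) ∈ Lplus ll S) → PP ∈ Lplus ll S := by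
    intro S hfreq
    have hcond : ∀ n, Phi ll (x n) ∈ Lplus ll S → Phi ll (x n) ∈ S ∪ LplusIF ll S := by
      intro n hn
      rcases hn with h | h
      · exact h
      · exact absurd h.2.1 (fun he => (he ▸ hx n : x (n + 1) ∈ (∅ : Set M)))
    have hIncl : ∀ n, Phi ll (x n) ∈ S ∪ LplusIF ll S →
        Iplus ll (x n) ⊆ ⋃ RR ∈ S, RR.2 := by
      intro n h
      rcases h with h | h
      · exact fun q hq => mem_biUnion h hq
      · exact h.2.2
    by_cases h2 : PP.2 = ∅
    · -- boundary point: use the subsequence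
      choose f hf1 hf2 using hfreq
      refine Or.inr ⟨hPP, h2, fun k => Phi ll (x (f k)), fun k => hcond _ (hf2 k), ?_, ?_⟩
      · intro a ha
        rw [hP1] at ha
        obtain ⟨m, ham⟩ := mem_iUnion.mp ha
        exact ⟨m, fun k hk => hmono m (f k) (le_trans (le_of_lt hk) (hf1 k)) ham⟩
      · intro y hy
        exact ⟨0, fun k _ hc => hy (hc.trans (hsubP (f k)))⟩
    · -- interior: PP ∈ LplusIF S
      have hRpf : PP ∈ Rpf ll := by
        rcases hPP with h | h | h
        · exact h
        · exact absurd h.1 hP1ne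
        · exact absurd h.1 h2
      have hcf : PP.2 ⊆ commonFuture ll PP.1 := hRpf.2.2.1
      obtain ⟨n, -, hn⟩ := hfreq 0
      have hn' := hIncl n (hcond n hn)
      refine Or.inl (Or.inr ⟨hPP, h2, fun q hq => ?_⟩)
      have hq' := hcf hq
      simp only [commonFuture, mem_iUnion, mem_setOf_eq] at hq'
      obtain ⟨y, hy1, hy2⟩ := hq'
      exact hn' (htrans _ _ _ (hy1 (hxP n)) hy2)
  -- key lemma for L⁻
  have keyB : ∀ S : Set (Set M × Set M),
      (∀ N : ℕ, ∃ n ≥ N, Phi ll (x n) ∈ Lminus ll S) → PP ∈ Lminus ll S := by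
    intro S hfreq
    have hcond : ∀ n, 1 ≤ n → Phi ll (x n) ∈ Lminus ll S →
        Iminus ll (x n) ⊆ ⋃ RR ∈ S, RR.1 := by
      intro n hn h
      have hne : (Phi ll (x n)).1 ≠ ∅ := by
        intro he
        have h0 : ll (x (n - 1)) (x n) := by
          have := hx (n - 1); rwa [Nat.sub_add_cancel hn] at this
        exact (he ▸ h0 : x (n - 1) ∈ (∅ : Set M))
      rcases h with h | h
      · rcases h with h | h
        · exact fun q hq => mem_biUnion h hq
        · exact h.2.2
      · exact absurd h.2.1 hne
    refine Or.inl (Or.inr ⟨hPP, hP1ne, fun q hq => ?_⟩)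
    rw [hP1] at hq
    obtain ⟨m, hqm⟩ := mem_iUnion.mp hq
    obtain ⟨n, hn, hmem⟩ := hfreq (m + 1)
    exact hcond n (by omega) hmem (hmono m n (by omega) hqm)
  -- induction over the generated topology
  intro U hU
  have hgen : TopologicalSpace.GenerateOpen
      {U : Set ↥(Mbar ll) | ∃ S : Set (Set M × Set M), S ⊆ Mbar ll ∧
        (U = (Subtype.val ⁻¹' Lplus ll S)ᶜ ∨ U = (Subtype.val ⁻¹' Lminus ll S)ᶜ)} U := hU
  clear hU
  induction hgen with
  | basic U hUs =>
    obtain ⟨S, -, rfl | rfl⟩ := hUs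
    · intro hmem
      simp only [mem_compl_iff, mem_preimage] at hmem ⊢
      by_contra hcon
      push_neg at hcon
      exact hmem (keyA S hcon)
    · intro hmem
      simp only [mem_compl_iff, mem_preimage] at hmem ⊢
      by_contra hcon
      push_neg at hcon
      exact hmem (keyB S hcon)
  | univ => exact fun _ => ⟨0, fun n _ => trivial⟩
  | inter U V hUo hVo ihU ihV =>
    intro hmem
    obtain ⟨N1, h1⟩ := ihU hmem.1
    obtain ⟨N2, h2⟩ := ihV hmem.2
    exact ⟨max N1 N2, fun n hn =>
      ⟨h1 n (le_trans (le_max_left _ _) hn), h2 n (le_trans (le_max_right _ _) hn)⟩⟩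
  | sUnion T hT ih =>
    intro hmem
    obtain ⟨V, hV, hmemV⟩ := hmem
    obtain ⟨N, hN⟩ := ih V hV hmemV
    exact ⟨N, fun n hn => ⟨V, hV, hN n hn⟩⟩
end

section
/- Assume (I⁻(p), I⁺(p)) ∈ R_pf for every p ∈ M. Let (x_n) be a sequence in M and let P̄ = (P,P*) ∈ M̄ be such that P = lim I⁻(x_n) and P* = lim I⁺(x_n). Then the sequence Φ(x_n) converges to P̄ in the topology T̄: every T̄-open set containing P̄ contains Φ(x_n) for all sufficiently large n. -/
open Set Topology

variable {M : Type*}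

lemma eventually_not_Lplus (ll : M → M → Prop)
    (hphi : ∀ p : M, Phi ll p ∈ Rpf ll)
    (x : ℕ → M) (PP : Set M × Set M) (hPP : PP ∈ Mbar ll)
    (hlimP : limPast ll (fun n => Iminus ll (x n)) PP.1)
    (hlimF : limFuture ll (fun n => Iplus ll (x n)) PP.2)
    (S : Set (Set M × Set M)) (hP : PP ∉ Lplus ll S) :
    ∃ N : ℕ, ∀ n ≥ N, Phi ll (x n) ∉ Lplus ll S := by
  by_contra h
  push_neg at h
  have h' : ∀ N, ∃ n ≥ N, Phi ll (x n) ∈ S ∪ LplusIF ll S := by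
    intro N
    obtain ⟨n, hn, hmem⟩ := h N
    refine ⟨n, hn, ?_⟩
    rcases hmem with hm | hm
    · exact hm
    · exact absurd hm.2.1 (by
        simpa using Set.nonempty_iff_ne_empty.mp (hphi (x n)).2.1.2.1)
  apply hP
  simp only [Lplus, ClFB, Set.mem_union, Set.mem_setOf_eq]
  by_cases hstar : PP.2 = ∅
  · obtain ⟨φ, hφ, hmem⟩ := Filter.extraction_of_frequently_atTop
      (Filter.frequently_atTop.mpr h')
    refine Or.inr ⟨hPP, hstar, fun k => Phi ll (x (φ k)), hmem, ?_, ?_⟩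
    · intro y hy
      obtain ⟨N, hN⟩ := hlimP.1 y hy
      exact ⟨N, fun k hk => hN (φ k) (lt_of_lt_of_le hk hφ.le_apply)⟩
    · intro y hy
      obtain ⟨N, hN⟩ := hlimP.2 y hy
      exact ⟨N, fun k hk => hN (φ k) (lt_of_lt_of_le hk hφ.le_apply)⟩
  · refine Or.inl (Or.inr ⟨hPP, hstar, ?_⟩)
    intro y hy
    obtain ⟨N, hN⟩ := hlimF.1 y hy
    obtain ⟨n, hn, hmem⟩ := h' (N + 1)
    have hyn : y ∈ Iplus ll (x n) := hN n (Nat.lt_of_lt_of_le (Nat.lt_succ_self N) hn)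
    rcases hmem with hm | hm
    · exact Set.mem_biUnion hm hyn
    · exact hm.2.2 hyn

lemma eventually_not_Lminus (ll : M → M → Prop)
    (hphi : ∀ p : M, Phi ll p ∈ Rpf ll)
    (x : ℕ → M) (PP : Set M × Set M) (hPP : PP ∈ Mbar ll)
    (hlimP : limPast ll (fun n => Iminus ll (x n)) PP.1)
    (hlimF : limFuture ll (fun n => Iplus ll (x n)) PP.2)
    (S : Set (Set M × Set M)) (hP : PP ∉ Lminus ll S) :
    ∃ N : ℕ, ∀ n ≥ N, Phi ll (x n) ∉ Lminus ll S := by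
  by_contra h
  push_neg at h
  have h' : ∀ N, ∃ n ≥ N, Phi ll (x n) ∈ S ∪ LminusIP ll S := by
    intro N
    obtain ⟨n, hn, hmem⟩ := h N
    refine ⟨n, hn, ?_⟩
    rcases hmem with hm | hm
    · exact hm
    · exact absurd hm.2.1 (by
        simpa using Set.nonempty_iff_ne_empty.mp (hphi (x n)).1.2.1)
  apply hP
  simp only [Lminus, ClPB, Set.mem_union, Set.mem_setOf_eq]
  by_cases hstar : PP.1 = ∅
  · obtain ⟨φ, hφ, hmem⟩ := Filter.extraction_of_frequently_atTop
      (Filter.frequently_atTop.mpr h')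
    refine Or.inr ⟨hPP, hstar, fun k => Phi ll (x (φ k)), hmem, ?_, ?_⟩
    · intro y hy
      obtain ⟨N, hN⟩ := hlimF.1 y hy
      exact ⟨N, fun k hk => hN (φ k) (lt_of_lt_of_le hk hφ.le_apply)⟩
    · intro y hy
      obtain ⟨N, hN⟩ := hlimF.2 y hy
      exact ⟨N, fun k hk => hN (φ k) (lt_of_lt_of_le hk hφ.le_apply)⟩
  · refine Or.inl (Or.inr ⟨hPP, hstar, ?_⟩)
    intro y hy
    obtain ⟨N, hN⟩ := hlimP.1 y hy
    obtain ⟨n, hn, hmem⟩ := h' (N + 1)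
    have hyn : y ∈ Iminus ll (x n) := hN n (Nat.lt_of_lt_of_le (Nat.lt_succ_self N) hn)
    rcases hmem with hm | hm
    · exact Set.mem_biUnion hm hyn
    · exact hm.2.2 hyn

/-- if `P = lim I⁻(x_n)` and `P* = lim I⁺(x_n)` for `P̄ = (P,P*) ∈ M̄`,
then `Φ(x_n)` converges to `P̄` in the topology `T̄`. -/
theorem seq_converges_of_limits (ll : M → M → Prop)
    (htrans : ∀ p q r : M, ll p q → ll q r → ll p r)
    (hirr : ∀ p : M, ¬ ll p p)
    (hphi : ∀ p : M, Phi ll p ∈ Rpf ll)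
    (x : ℕ → M)
    (PP : Set M × Set M) (hPP : PP ∈ Mbar ll)
    (hlimP : limPast ll (fun n => Iminus ll (x n)) PP.1)
    (hlimF : limFuture ll (fun n => Iplus ll (x n)) PP.2) :
    ∀ U : Set ↥(Mbar ll), IsOpen[Tbar ll] U → (⟨PP, hPP⟩ : ↥(Mbar ll)) ∈ U →
      ∃ N : ℕ, ∀ n ≥ N,
        (⟨Phi ll (x n), Or.inl (hphi (x n))⟩ : ↥(Mbar ll)) ∈ U := by
  intro U hU
  induction hU with
  | basic U hUb =>
    intro hmem
    obtain ⟨S, _, hc⟩ := hUb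
    rcases hc with rfl | rfl
    · obtain ⟨N, hN⟩ := eventually_not_Lplus ll hphi x PP hPP hlimP hlimF S hmem
      exact ⟨N, fun n hn => hN n hn⟩
    · obtain ⟨N, hN⟩ := eventually_not_Lminus ll hphi x PP hPP hlimP hlimF S hmem
      exact ⟨N, fun n hn => hN n hn⟩
  | univ => exact fun _ => ⟨0, fun n _ => trivial⟩
  | inter U V _ _ ihU ihV =>
    intro hmem
    obtain ⟨N1, h1⟩ := ihU hmem.1
    obtain ⟨N2, h2⟩ := ihV hmem.2
    exact ⟨max N1 N2, fun n hn =>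
      ⟨h1 n (le_trans (le_max_left _ _) hn), h2 n (le_trans (le_max_right _ _) hn)⟩⟩
  | sUnion K _ ih =>
    intro hmem
    obtain ⟨t, htK, hmt⟩ := hmem
    obtain ⟨N, hN⟩ := ih t htK hmt
    exact ⟨N, fun n hn => ⟨t, htK, hN n hn⟩⟩
end

section
/- Assume (I⁻(p), I⁺(p)) ∈ R_pf for every p ∈ M. Let (x_n) be a sequence in M with x_n ≪ x_{n+1} for all n, let P = ⋃_n I⁻(x_n), suppose P̄ = (P,P*) ∈ M̄, and fix m. Then P̄ ∉ L⁻({Φ(x_m)}), while Φ(p) ∈ L⁻({Φ(x_m)}) for every p ∈ M with p ≪ x_m. Consequently M̄ \ L⁻({Φ(x_m)}) is a T̄-open set containing P̄ that contains no Φ(p) with p ≪ x_m. -/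
open Set Topology

variable {M : Type*}

/-- `P̄ ∉ L⁻({Φ(x_m)})` while `Φ(p) ∈ L⁻({Φ(x_m)})` whenever `p ≪ x_m`;
hence `M̄ \ L⁻({Φ(x_m)})` is a `T̄`-open set containing `P̄` but no `Φ(p)` with
`p ≪ x_m`. -/
theorem sep_open_from_Lminus (ll : M → M → Prop)
    (htrans : ∀ p q r : M, ll p q → ll q r → ll p r)
    (hirr : ∀ p : M, ¬ ll p p)
    (hphi : ∀ p : M, Phi ll p ∈ Rpf ll)
    (x : ℕ → M) (hx : ∀ n, ll (x n) (x (n + 1)))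
    (PP : Set M × Set M) (hPP : PP ∈ Mbar ll)
    (hP1 : PP.1 = ⋃ n, Iminus ll (x n)) (m : ℕ) :
    PP ∉ Lminus ll {Phi ll (x m)} ∧
    (∀ p : M, ll p (x m) → Phi ll p ∈ Lminus ll {Phi ll (x m)}) ∧
    IsOpen[Tbar ll] ((Subtype.val ⁻¹' Lminus ll {Phi ll (x m)})ᶜ) ∧
    (⟨PP, hPP⟩ : ↥(Mbar ll)) ∈ (Subtype.val ⁻¹' Lminus ll {Phi ll (x m)})ᶜ ∧
    (∀ (p : M) (hp : Phi ll p ∈ Mbar ll), ll p (x m) →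
      (⟨Phi ll p, hp⟩ : ↥(Mbar ll)) ∉ (Subtype.val ⁻¹' Lminus ll {Phi ll (x m)})ᶜ) := by

  have hxm_mem : x m ∈ PP.1 := by
    rw [hP1]; exact Set.mem_iUnion.2 ⟨m + 1, hx m⟩
  have hPPne : PP.1 ≠ ∅ := fun h => by rw [h] at hxm_mem; exact hxm_mem
  have hsub : ∀ p : M, ll p (x m) → Iminus ll p ⊆ Iminus ll (x m) := by
    intro p hp q hq
    exact htrans q p (x m) hq hp
  have hnotin : PP ∉ Lminus ll {Phi ll (x m)} := by
    intro h
    rcases h with (h | h) | h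
    · have : x m ∈ Iminus ll (x m) := by
        have : PP = Phi ll (x m) := h
        rw [this] at hxm_mem; exact hxm_mem
      exact hirr (x m) this
    · have h2 := h.2.2 hxm_mem
      simp only [Set.mem_singleton_iff, Set.iUnion_iUnion_eq_left] at h2
      exact hirr (x m) h2
    · exact hPPne h.2.1
  have hmemL : ∀ p : M, ll p (x m) → Phi ll p ∈ Lminus ll {Phi ll (x m)} := by
    intro p hp
    left; right
    refine ⟨Or.inl (hphi p), ?_, ?_⟩
    · have hIP := (hphi p).1
      intro h
      rcases hIP.2.1 with ⟨q, hq⟩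
      rw [h] at hq
      exact hq
    · simp only [Set.mem_singleton_iff, Set.iUnion_iUnion_eq_left]
      exact hsub p hp
  have hopen : IsOpen[Tbar ll] ((Subtype.val ⁻¹' Lminus ll {Phi ll (x m)})ᶜ) := by
    apply TopologicalSpace.GenerateOpen.basic
    exact ⟨{Phi ll (x m)}, by
      intro y hy
      rw [Set.mem_singleton_iff.1 hy]
      exact Or.inl (hphi (x m)), Or.inr rfl⟩
  refine ⟨hnotin, hmemL, hopen, hnotin, ?_⟩
  intro p hp hpx hmem
  exact hmem (hmemL p hpx)
end

section
/- If (P,P₁*) and (P,P₂*) both belong to R_pf with P₁* ≠ P₂*, then (P,P₁*) ∉ L⁺({(P,P₂*)}) and (P,P₂*) ∉ L⁺({(P,P₁*)}). Consequently the two points (P,P₁*) and (P,P₂*) of M̄ are T₁-separated in the topology T̄: each lies in a T̄-open set not containing the other. -/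
open Set Topology

variable {M : Type*}

/-- two ideal points `(P,P₁*)`, `(P,P₂*)` of `R_pf` with the same past
and different futures are `T₁`-separated in `T̄`. -/
theorem T1_sep_same_past (ll : M → M → Prop)
    (htrans : ∀ p q r : M, ll p q → ll q r → ll p r)
    (hirr : ∀ p : M, ¬ ll p p)
    (P P1 P2 : Set M)
    (h1 : (P, P1) ∈ Rpf ll) (h2 : (P, P2) ∈ Rpf ll) (hne : P1 ≠ P2) :
    (P, P1) ∉ Lplus ll {(P, P2)} ∧
    (P, P2) ∉ Lplus ll {(P, P1)} ∧
    (∃ U : Set ↥(Mbar ll), IsOpen[Tbar ll] U ∧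
      (⟨(P, P1), Or.inl h1⟩ : ↥(Mbar ll)) ∈ U ∧
      (⟨(P, P2), Or.inl h2⟩ : ↥(Mbar ll)) ∉ U) ∧
    (∃ U : Set ↥(Mbar ll), IsOpen[Tbar ll] U ∧
      (⟨(P, P2), Or.inl h2⟩ : ↥(Mbar ll)) ∈ U ∧
      (⟨(P, P1), Or.inl h1⟩ : ↥(Mbar ll)) ∉ U) := by
  have key : ∀ Q1 Q2 : Set M, (P, Q1) ∈ Rpf ll → (P, Q2) ∈ Rpf ll → Q1 ≠ Q2 →
      (P, Q1) ∉ Lplus ll {(P, Q2)} := by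
    intro Q1 Q2 hQ1 hQ2 hneq hmem
    obtain ⟨hIP, hIF1, hsub1, hmax1, -, -⟩ := hQ1
    obtain ⟨-, hIF2, hsub2, -, -, -⟩ := hQ2
    rcases hmem with hmem | hmem
    · rcases hmem with hmem | hmem
      · exact hneq (congrArg Prod.snd hmem)
      · obtain ⟨-, hne2, hsubs⟩ := hmem
        have hsub' : Q1 ⊆ Q2 := by simpa using hsubs
        exact hmax1 ⟨Q2, hIF2, (Ne.symm hneq), hsub', hsub2⟩
    · obtain ⟨-, hemp, -⟩ := hmem
      exact hIF1.2.1.ne_empty hemp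
  have k12 := key P1 P2 h1 h2 hne
  have k21 := key P2 P1 h2 h1 hne.symm
  have selfmem : ∀ Q : Set M, (P, Q) ∈ Lplus ll {(P, Q)} := fun Q =>
    Or.inl (Or.inl rfl)
  refine ⟨k12, k21, ?_, ?_⟩
  · refine ⟨(Subtype.val ⁻¹' Lplus ll {(P, P2)})ᶜ,
      TopologicalSpace.GenerateOpen.basic _
        ⟨{(P, P2)}, Set.singleton_subset_iff.mpr (Or.inl h2), Or.inl rfl⟩,
      k12, ?_⟩
    simp only [Set.mem_compl_iff, Set.mem_preimage, not_not]
    exact selfmem P2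
  · refine ⟨(Subtype.val ⁻¹' Lplus ll {(P, P1)})ᶜ,
      TopologicalSpace.GenerateOpen.basic _
        ⟨{(P, P1)}, Set.singleton_subset_iff.mpr (Or.inl h1), Or.inl rfl⟩,
      k21, ?_⟩
    simp only [Set.mem_compl_iff, Set.mem_preimage, not_not]
    exact selfmem P1
end
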